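/- arXiv:1906.09128 — 4 statements merged into one kernel-verified Lean document; each statement's English description precedes it below -/
import Mathlib

section
/- If a discrete connection on a discrete vector bundle over a cellular complex is flat (i.e., for every codimension-2 face the two transport compositions around the square agree), then the discrete covariant exterior derivative satisfies δ_t^{k+1} ∘ δ_t^k = 0. -/
/-- If a discrete connection on a discrete vector bundle over a
cellular complex is flat, then the discrete covariant exterior derivative
satisfies `δ ∘ δ = 0`. -/
theorem stmt_0
    {Cell : Type} [Fintype Cell] [DecidableEq Cell]
    (dim : Cell → ℕ) (o : Cell → Cell → ℤ)
    (L : Cell → Type) [∀ T, AddCommGroup (L T)] [∀ T, Module ℝ (L T)]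
    (t : ∀ T T' : Cell, L T' →ₗ[ℝ] L T)
    (hbij : ∀ T T', o T T' ≠ 0 → Function.Bijective (t T T'))
    (hdim : ∀ T T', o T T' ≠ 0 → dim T = dim T' + 1)
    (horient : ∀ T T'' : Cell, dim T = dim T'' + 2 →
      (∑ T' : Cell, o T T' * o T' T'') = 0)
    (hflat : ∀ T T₀ T₁ T'' : Cell,
      o T T₀ ≠ 0 → o T₀ T'' ≠ 0 → o T T₁ ≠ 0 → o T₁ T'' ≠ 0 →
      (t T T₀).comp (t T₀ T'') = (t T T₁).comp (t T₁ T''))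
    (δ : (∀ T, L T) → (∀ T, L T))
    (hδ : ∀ u T, δ u T = ∑ T' : Cell, (o T T' : ℝ) • t T T' (u T')) :
    ∀ u T, δ (δ u) T = 0 := by
  intro u T
  rw [hδ]
  have h1 : ∀ T' : Cell, (o T T' : ℝ) • t T T' (δ u T')
      = ∑ T'' : Cell, ((o T T' * o T' T'' : ℤ) : ℝ) • t T T' (t T' T'' (u T'')) := by
    intro T'
    rw [hδ, map_sum, Finset.smul_sum]
    refine Finset.sum_congr rfl fun T'' _ => ?_
    rw [map_smul]
    push_cast
    rw [smul_smul]
  calc ∑ T' : Cell, (o T T' : ℝ) • t T T' (δ u T')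
      = ∑ T' : Cell, ∑ T'' : Cell,
          ((o T T' * o T' T'' : ℤ) : ℝ) • t T T' (t T' T'' (u T'')) := by
        exact Finset.sum_congr rfl fun T' _ => h1 T'
    _ = ∑ T'' : Cell, ∑ T' : Cell,
          ((o T T' * o T' T'' : ℤ) : ℝ) • t T T' (t T' T'' (u T'')) :=
        Finset.sum_comm
    _ = 0 := by
        refine Finset.sum_eq_zero fun T'' _ => ?_
        by_cases hS : ∃ S : Cell, o T S ≠ 0 ∧ o S T'' ≠ 0
        · obtain ⟨S, hS1, hS2⟩ := hS
          have key : ∀ T' : Cell,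
              ((o T T' * o T' T'' : ℤ) : ℝ) • t T T' (t T' T'' (u T''))
              = ((o T T' * o T' T'' : ℤ) : ℝ) • t T S (t S T'' (u T'')) := by
            intro T'
            by_cases h1' : o T T' = 0
            · simp [h1']
            by_cases h2' : o T' T'' = 0
            · simp [h2']
            have := hflat T T' S T'' h1' h2' hS1 hS2
            have := LinearMap.congr_fun this (u T'')
            simp only [LinearMap.comp_apply] at this
            rw [this]
          rw [Finset.sum_congr rfl fun T' _ => key T', ← Finset.sum_smul]
          have hd : dim T = dim T'' + 2 := by
            rw [hdim T S hS1, hdim S T'' hS2]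
          rw [← Int.cast_sum, horient T T'' hd]
          simp
        · push_neg at hS
          refine Finset.sum_eq_zero fun T' _ => ?_
          by_cases h1' : o T T' = 0
          · simp [h1']
          · simp [hS T' h1']
end

section
/- The Poincaré operators of the strain elasticity complex satisfy the sequence property p₁ ∘ p₂ = 0. -/
open Matrix MeasureTheory

noncomputable section

/-- Points of the plane. -/
abbrev V2 := Fin 2 → ℝ
/-- 2×2 real matrices. -/
abbrev M2 := Matrix (Fin 2) (Fin 2) ℝ

/-- Partial derivative `∂ᵢ` of a scalar field. -/
noncomputable def pd (i : Fin 2) (f : V2 → ℝ) : V2 → ℝ :=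
  fun x => fderiv ℝ f x (Pi.single i 1)

/-- The vector `x` rotated by `π/2`: `x^R = (-x₂, x₁)`. -/
def xR (x : V2) : V2 := ![-(x 1), x 0]

/-- The Airy operator of a scalar field. -/
noncomputable def airyOp (u : V2 → ℝ) : V2 → M2 := fun x =>
  !![pd 1 (pd 1 u) x, -(pd 1 (pd 0 u) x); -(pd 0 (pd 1 u) x), pd 0 (pd 0 u) x]

/-- The Hessian of a scalar field. -/
noncomputable def hessOp (u : V2 → ℝ) : V2 → M2 := fun x =>
  Matrix.of fun i j => pd i (pd j u) x

/-- Row-wise divergence of a matrix field. -/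
noncomputable def matDiv (u : V2 → M2) : V2 → V2 := fun x =>
  ![pd 0 (fun y => u y 0 0) x + pd 1 (fun y => u y 0 1) x,
    pd 0 (fun y => u y 1 0) x + pd 1 (fun y => u y 1 1) x]

/-- Row-wise curl of a matrix field (one scalar per row). -/
noncomputable def matCurl (u : V2 → M2) : V2 → V2 := fun x =>
  ![pd 0 (fun y => u y 0 1) x - pd 1 (fun y => u y 0 0) x,
    pd 0 (fun y => u y 1 1) x - pd 1 (fun y => u y 1 0) x]

/-- Deformation (symmetric gradient) of a vector field. -/
noncomputable def defoOp (u : V2 → V2) : V2 → M2 := fun x =>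
  Matrix.of fun i j => (pd j (fun y => u y i) x + pd i (fun y => u y j) x) / 2

/-- The Saint-Venant operator of a matrix field:
`∂₂₂u₁₁ + ∂₁₁u₂₂ − ∂₁₂u₂₁ − ∂₂₁u₁₂`. -/
noncomputable def svenOp (u : V2 → M2) : V2 → ℝ := fun x =>
  pd 1 (pd 1 (fun y => u y 0 0)) x + pd 0 (pd 0 (fun y => u y 1 1)) x
    - pd 0 (pd 1 (fun y => u y 1 0)) x - pd 1 (pd 0 (fun y => u y 0 1)) x

/-- Symmetric part of a matrix. -/
def symM (m : M2) : M2 := (2⁻¹ : ℝ) • (m + m.transpose)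

/-- Row-wise curl of a (column) vector field, producing a matrix whose `i`-th
row is `curl vᵢ = (∂₂vᵢ, −∂₁vᵢ)`. -/
noncomputable def curlRows (v : V2 → V2) : V2 → M2 := fun x =>
  !![pd 1 (fun y => v y 0) x, -(pd 0 (fun y => v y 0) x);
     pd 1 (fun y => v y 1) x, -(pd 0 (fun y => v y 1) x)]

/-- Poincaré operator `p₁` for the stress complex. -/
noncomputable def p1s (u : V2 → M2) : V2 → ℝ := fun x =>
  ∫ t in (0:ℝ)..1, (1 - t) * (xR x ⬝ᵥ (u (t • x)).mulVec (xR x))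

/-- Poincaré operator `p₂` for the stress complex. -/
noncomputable def p2s (u : V2 → V2) : V2 → M2 := fun x =>
  symM (Matrix.of fun i j => ∫ t in (0:ℝ)..1, t * (u (t • x) i * x j))
  + symM (curlRows (fun y =>
      (∫ t in (0:ℝ)..1, (t * (1 - t)) * (xR y ⬝ᵥ u (t • y))) • y) x)

/-- Poincaré operator `p₁` for the strain complex. -/
noncomputable def p1e (u : V2 → M2) : V2 → V2 := fun x i =>
  (∫ t in (0:ℝ)..1, ((u (t • x)).transpose.mulVec x) i)
  + ∫ t in (0:ℝ)..1, (1 - t) * ((matCurl u (t • x) ⬝ᵥ x) * xR x i)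

/-- Poincaré operator `p₂` for the strain complex. -/
noncomputable def p2e (u : V2 → ℝ) : V2 → M2 := fun x =>
  (∫ t in (0:ℝ)..1, t * (1 - t) * u (t • x)) • Matrix.vecMulVec (xR x) (xR x)

/-- Rotation by `π/2`. -/
def J2 : M2 := !![0, -1; 1, 0]

/-- The operator `K m = mᵀ − tr(m)·I₂`. -/
def KOp (m : M2) : M2 := m.transpose - (Matrix.trace m) • 1

set_option maxHeartbeats 1000000 in
noncomputable def gInt (u : V2 → ℝ) : V2 → ℝ :=
  fun x => ∫ t in (0:ℝ)..1, t * (1 - t) * u (t • x)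

set_option maxHeartbeats 1000000 in
set_option synthInstance.maxHeartbeats 400000 in
lemma g_diffAt (U : Set V2) (hU : IsOpen U)
    (hstar : ∀ x ∈ U, ∀ t ∈ Set.Icc (0:ℝ) 1, t • x ∈ U)
    (u : V2 → ℝ) (hu : ContDiffOn ℝ (⊤ : ℕ∞) u U) {x₀ : V2} (hx : x₀ ∈ U) :
    DifferentiableAt ℝ (gInt u) x₀ := by
  have hcont : ContinuousOn u U := hu.continuousOn
  have hdiff : ∀ y ∈ U, DifferentiableAt ℝ u y := fun y hy =>
    (hu.differentiableOn (by simp)).differentiableAt (hU.mem_nhds hy)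
  have hfc : ContinuousOn (fderiv ℝ u) U := hu.continuousOn_fderiv_of_isOpen hU (by simp)
  set K : Set V2 := (fun t : ℝ => t • x₀) '' Set.Icc 0 1 with hKdef
  have hK : IsCompact K := isCompact_Icc.image (continuous_id.smul continuous_const)
  have hKU : K ⊆ U := by
    rintro _ ⟨t, ht, rfl⟩
    exact hstar x₀ hx t ht
  obtain ⟨δ, δpos, hδ⟩ := hK.exists_thickening_subset_open hU hKU
  set C : Set V2 := Metric.cthickening (δ/2) K with hCdef
  have hC : IsCompact C := hK.cthickening
  have hCU : C ⊆ U := (Metric.cthickening_subset_thickening' δpos (by linarith) K).trans hδ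
  obtain ⟨M, hM⟩ := hC.exists_bound_of_continuousOn (hfc.mono hCU)
  have hmem : ∀ x ∈ Metric.ball x₀ (δ/2), ∀ t ∈ Set.Icc (0:ℝ) 1, t • x ∈ C := by
    intro x hxb t ht
    have h1 : dist (t • x) (t • x₀) ≤ δ/2 := by
      rw [dist_eq_norm, ← smul_sub, norm_smul]
      have : ‖x - x₀‖ < δ/2 := by rwa [Metric.mem_ball, dist_eq_norm] at hxb
      have ht' : |t| ≤ 1 := abs_le.2 ⟨by linarith [ht.1], ht.2⟩
      calc ‖t‖ * ‖x - x₀‖ ≤ 1 * ‖x - x₀‖ := by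
            exact mul_le_mul_of_nonneg_right ht' (norm_nonneg _)
        _ ≤ δ/2 := by linarith
    exact Metric.mem_cthickening_of_dist_le _ _ _ _ ⟨t, ht, rfl⟩ h1
  have hM0 : 0 ≤ M := by
    have h0K : (0:V2) ∈ C := Metric.self_subset_cthickening K ⟨0, ⟨le_rfl, zero_le_one⟩, by simp⟩
    exact le_trans (norm_nonneg _) (hM _ h0K)
  set F' : V2 → ℝ → (V2 →L[ℝ] ℝ) := fun x t =>
    (t * (1 - t)) • ((fderiv ℝ u (t • x)).comp (t • ContinuousLinearMap.id ℝ V2)) with hF'def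
  have hIoc : Set.uIoc (0:ℝ) 1 = Set.Ioc 0 1 := Set.uIoc_of_le zero_le_one
  have key := intervalIntegral.hasFDerivAt_integral_of_dominated_of_fderiv_le
    (F := fun x t => t * (1 - t) * u (t • x)) (F' := F') (x₀ := x₀)
    (a := 0) (b := 1) (μ := volume) (bound := fun _ => M) (Metric.ball_mem_nhds x₀ (half_pos δpos))
    ?_ ?_ ?_ ?_ ?_ ?_
  · exact key.differentiableAt
  · -- hF_meas
    filter_upwards [Metric.ball_mem_nhds x₀ (half_pos δpos)] with x hxb
    have hc : ContinuousOn (fun t : ℝ => t * (1 - t) * u (t • x)) (Set.Icc 0 1) := by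
      refine ((continuousOn_id.mul (continuousOn_const.sub continuousOn_id)).mul ?_)
      exact hcont.comp ((continuous_id.smul continuous_const).continuousOn)
        (fun t ht => hCU (hmem x hxb t ht))
    rw [hIoc]
    exact (hc.mono Set.Ioc_subset_Icc_self).aestronglyMeasurable measurableSet_Ioc
  · -- hF_int
    apply ContinuousOn.intervalIntegrable
    rw [Set.uIcc_of_le zero_le_one]
    refine (continuousOn_id.mul (continuousOn_const.sub continuousOn_id)).mul ?_
    exact hcont.comp ((continuous_id.smul continuous_const).continuousOn)
      (fun t ht => hstar x₀ hx t ht)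
  · -- hF'_meas
    have hc : ContinuousOn (F' x₀) (Set.Icc 0 1) := by
      have h1 : ContinuousOn (fun t : ℝ => fderiv ℝ u (t • x₀)) (Set.Icc 0 1) :=
        hfc.comp ((continuous_id.smul continuous_const).continuousOn)
          (fun t ht => hstar x₀ hx t ht)
      have h2 : ContinuousOn (fun t : ℝ => t • ContinuousLinearMap.id ℝ V2) (Set.Icc 0 1) :=
        (continuous_id.smul continuous_const).continuousOn
      have h3 : ContinuousOn
          (fun t : ℝ => (fderiv ℝ u (t • x₀)).comp (t • ContinuousLinearMap.id ℝ V2))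
          (Set.Icc 0 1) := by
        have := isBoundedBilinearMap_comp (𝕜 := ℝ) (E := V2) (F := V2) (G := ℝ)
        exact (this.continuous.comp_continuousOn (h1.prodMk h2))
      exact ((continuousOn_id.mul (continuousOn_const.sub continuousOn_id)).smul h3)
    rw [hIoc]
    exact (hc.mono Set.Ioc_subset_Icc_self).aestronglyMeasurable measurableSet_Ioc
  · -- h_bound
    refine Filter.Eventually.of_forall (fun t ht x hxb => ?_)
    rw [hIoc] at ht
    have ht' : t ∈ Set.Icc (0:ℝ) 1 := ⟨le_of_lt ht.1, ht.2⟩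
    have hmemC : t • x ∈ C := hmem x hxb t ht'
    have hb1 : ‖fderiv ℝ u (t • x)‖ ≤ M := hM _ hmemC
    have hb2 : ‖(t • ContinuousLinearMap.id ℝ V2 : V2 →L[ℝ] V2)‖ ≤ |t| := by
      refine le_trans (ContinuousLinearMap.opNorm_smul_le t _) ?_
      rw [Real.norm_eq_abs]
      calc |t| * ‖ContinuousLinearMap.id ℝ V2‖ ≤ |t| * 1 :=
            mul_le_mul_of_nonneg_left (ContinuousLinearMap.norm_id_le) (abs_nonneg t)
        _ = |t| := mul_one _
    have habs : |t * (1 - t)| ≤ 1 := by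
      rw [abs_mul]
      have h1 : |t| ≤ 1 := abs_le.2 ⟨by linarith [ht'.1], ht'.2⟩
      have h2 : |1 - t| ≤ 1 := abs_le.2 ⟨by linarith [ht'.2], by linarith [ht'.1]⟩
      nlinarith [abs_nonneg t, abs_nonneg (1 - t)]
    have habs2 : |t| ≤ 1 := abs_le.2 ⟨by linarith [ht'.1], ht'.2⟩
    simp only [hF'def]
    refine le_trans (ContinuousLinearMap.opNorm_smul_le (t * (1 - t)) _) ?_
    rw [Real.norm_eq_abs]
    calc |t * (1 - t)| * ‖(fderiv ℝ u (t • x)).comp (t • ContinuousLinearMap.id ℝ V2)‖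
        ≤ 1 * ‖(fderiv ℝ u (t • x)).comp (t • ContinuousLinearMap.id ℝ V2)‖ :=
          mul_le_mul_of_nonneg_right habs (norm_nonneg _)
      _ = ‖(fderiv ℝ u (t • x)).comp (t • ContinuousLinearMap.id ℝ V2)‖ := one_mul _
      _ ≤ ‖fderiv ℝ u (t • x)‖ * ‖(t • ContinuousLinearMap.id ℝ V2 : V2 →L[ℝ] V2)‖ :=
          ContinuousLinearMap.opNorm_comp_le _ _
      _ ≤ M * 1 := by
          apply mul_le_mul hb1 (hb2.trans habs2) (norm_nonneg _) hM0
      _ = M := mul_one _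
  · exact intervalIntegrable_const
  · -- h_diff
    refine Filter.Eventually.of_forall (fun t ht x hxb => ?_)
    rw [hIoc] at ht
    have ht' : t ∈ Set.Icc (0:ℝ) 1 := ⟨le_of_lt ht.1, ht.2⟩
    have hxU : t • x ∈ U := hCU (hmem x hxb t ht')
    have h1 : HasFDerivAt (fun x : V2 => t • x)
        (t • ContinuousLinearMap.id ℝ V2) x :=
      (t • ContinuousLinearMap.id ℝ V2).hasFDerivAt
    have h2 : HasFDerivAt u (fderiv ℝ u (t • x)) (t • x) :=
      (hdiff _ hxU).hasFDerivAt
    have h3 : HasFDerivAt (fun x : V2 => u (t • x))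
        ((fderiv ℝ u (t • x)).comp (t • ContinuousLinearMap.id ℝ V2)) x :=
      h2.comp x h1
    exact h3.const_mul (t * (1 - t))

lemma p2e_apply (u : V2 → ℝ) (z : V2) (i j : Fin 2) :
    p2e u z i j = gInt u z * (xR z i * xR z j) := by
  simp [p2e, gInt, Matrix.smul_apply, smul_eq_mul, Matrix.vecMulVec_apply, mul_assoc]

lemma pd_neg (k : Fin 2) (f : V2 → ℝ) (y : V2) :
    pd k (fun z => -(f z)) y = -(pd k f y) := by
  simp [pd, fderiv_neg]

lemma pd_gq {g : V2 → ℝ} {G : V2 →L[ℝ] ℝ} {y : V2}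
    (hG : HasFDerivAt g G y) (a b k : Fin 2) :
    pd k (fun z => g z * (z a * z b)) y
      = (y a * y b) * G (Pi.single k 1)
        + g y * ((Pi.single k (1:ℝ) : V2) a * y b + y a * (Pi.single k (1:ℝ) : V2) b) := by
  have ha : HasFDerivAt (fun z : V2 => z a)
      (ContinuousLinearMap.proj a : V2 →L[ℝ] ℝ) y := hasFDerivAt_apply a y
  have hb : HasFDerivAt (fun z : V2 => z b)
      (ContinuousLinearMap.proj b : V2 →L[ℝ] ℝ) y := hasFDerivAt_apply b y
  have hq := ha.mul hb
  have h := hG.mul hq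
  simp only [pd]
  rw [show (fun z => g z * (z a * z b)) = g * ((fun z : V2 => z a) * fun z => z b) from rfl,
    h.fderiv]
  simp only [ContinuousLinearMap.add_apply, ContinuousLinearMap.smul_apply,
    ContinuousLinearMap.proj_apply, smul_eq_mul, Pi.mul_apply]
  ring

lemma curl_dot (u : V2 → ℝ) {G : V2 →L[ℝ] ℝ} {x : V2} {t : ℝ}
    (hG : HasFDerivAt (gInt u) G (t • x)) :
    matCurl (p2e u) (t • x) ⬝ᵥ x = 0 := by
  have e00 : (fun z => p2e u z 0 0) = fun z => gInt u z * (z 1 * z 1) := by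
    funext z; rw [p2e_apply]; simp [xR]
  have e01 : (fun z => p2e u z 0 1) = fun z => -(gInt u z * (z 1 * z 0)) := by
    funext z; rw [p2e_apply]; simp [xR]
  have e10 : (fun z => p2e u z 1 0) = fun z => -(gInt u z * (z 0 * z 1)) := by
    funext z; rw [p2e_apply]; simp [xR]
  have e11 : (fun z => p2e u z 1 1) = fun z => gInt u z * (z 0 * z 0) := by
    funext z; rw [p2e_apply]; simp [xR]
  have hy : ∀ a : Fin 2, (t • x) a = t * x a := fun a => rfl
  simp only [matCurl, e00, e01, e10, e11, dotProduct, Fin.sum_univ_two,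
    Matrix.cons_val_zero, Matrix.cons_val_one, Matrix.head_cons,
    pd_neg, pd_gq hG]
  simp only [hy, Pi.single_eq_same, Pi.single_eq_of_ne (by decide : (1:Fin 2) ≠ 0),
    Pi.single_eq_of_ne (by decide : (0:Fin 2) ≠ 1)]
  ring


/-- Sequence property of the Poincaré operators of the strain
elasticity complex: `p₁ ∘ p₂ = 0`. -/
theorem stmt_12 (U : Set V2) (hU : IsOpen U) (h0 : (0 : V2) ∈ U)
    (hstar : ∀ x ∈ U, ∀ t ∈ Set.Icc (0:ℝ) 1, t • x ∈ U)
    (u : V2 → ℝ) (hu : ContDiffOn ℝ (⊤ : ℕ∞) u U) :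
    ∀ x ∈ U, p1e (p2e u) x = 0 := by
  intro x hx
  funext i
  simp only [p1e, Pi.zero_apply]
  have h1 : ∀ t : ℝ, (((p2e u (t • x)).transpose.mulVec x) i) = 0 := by
    intro t
    fin_cases i <;>
      · simp [p2e, Matrix.mulVec, dotProduct, Fin.sum_univ_two, Matrix.transpose_apply,
          Matrix.vecMulVec_apply, Matrix.smul_apply, smul_eq_mul, xR, Pi.smul_apply]
        ring
  have A : (∫ t in (0:ℝ)..1, ((p2e u (t • x)).transpose.mulVec x) i) = 0 := by
    simp [h1]
  have B : (∫ t in (0:ℝ)..1, (1 - t) * ((matCurl (p2e u) (t • x) ⬝ᵥ x) * xR x i)) = 0 := by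
    have hcong : Set.EqOn
        (fun t : ℝ => (1 - t) * ((matCurl (p2e u) (t • x) ⬝ᵥ x) * xR x i))
        (fun _ => (0:ℝ)) (Set.uIcc 0 1) := by
      intro t ht
      rw [Set.uIcc_of_le zero_le_one] at ht
      have hyU : t • x ∈ U := hstar x hx t ht
      have hG := (g_diffAt U hU hstar u hu hyU).hasFDerivAt
      simp [curl_dot u hG]
    rw [intervalIntegral.integral_congr hcong, intervalIntegral.integral_zero]
  rw [A, B, add_zero]

end
end

section
/- Diagram chase (Bernstein–Gelfand–Gelfand) construction: given a commuting diagram of two cochain complexes X^•, Y^• with maps φ^j : Y^j → X^{j+1} satisfying d φ^j = φ^{j+1} d, such that φ^j is injective for j < i, bijective for j = i, and surjective for j > i, the operator 𝕕 = d ∘ (φ^i)^{-1} ∘ d induces a well-defined complex ... → coker φ^{i-1} → ker φ^{i+1} → ..., and if X^• and Y^• are exact then this derived complex is exact. -/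
/-- **BGG diagram chase.** Given two cochain complexes `X^•`, `Y^•`
linked by maps `φ^j : Y^j → X^{j+1}` commuting with the differentials, with
`φ^j` injective for `j < i`, bijective for `j = i`, surjective for `j > i`, the
operator `𝕕 = d ∘ (φ^i)⁻¹ ∘ d` induces a well-defined complex
`... → coker φ^{i-1} → ker φ^{i+1} → ...`, and if `X^•` and `Y^•` are exact then
this derived complex is exact (all statements are expressed elementwise, a class
of `coker φ^j` being represented by an element of `X^{j+1}`). -/
theorem stmt_16
    (X Y : ℕ → Type)
    [∀ n, AddCommGroup (X n)] [∀ n, Module ℝ (X n)]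
    [∀ n, AddCommGroup (Y n)] [∀ n, Module ℝ (Y n)]
    (dX : ∀ n, X n →ₗ[ℝ] X (n + 1)) (dY : ∀ n, Y n →ₗ[ℝ] Y (n + 1))
    (hdX : ∀ n, (dX (n + 1)).comp (dX n) = 0)
    (hdY : ∀ n, (dY (n + 1)).comp (dY n) = 0)
    (φ : ∀ n, Y n →ₗ[ℝ] X (n + 1))
    (hφ : ∀ n, (φ (n + 1)).comp (dY n) = (dX (n + 1)).comp (φ n))
    (i : ℕ)
    (hinj : ∀ j, j < i → Function.Injective (φ j))
    (hbij : Function.Bijective (φ i))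
    (hsurj : ∀ j, j > i → Function.Surjective (φ j))
    (hXexact : (∀ x : X 0, dX 0 x = 0 → x = 0) ∧
      ∀ (n : ℕ) (x : X (n + 1)), dX (n + 1) x = 0 → ∃ x', dX n x' = x)
    (hYexact : (∀ y : Y 0, dY 0 y = 0 → y = 0) ∧
      ∀ (n : ℕ) (y : Y (n + 1)), dY (n + 1) y = 0 → ∃ y', dY n y' = y) :
    -- 𝕕 is well defined: it lands in ker φ^{i+1} ...
    (∀ (x : X i) (y : Y i), φ i y = dX i x → φ (i + 1) (dY i y) = 0)
    -- ... and kills classes of coboundaries of coker φ^{i-1}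
    ∧ (∀ j, j + 1 = i → ∀ (x' : X j) (y' : Y j) (y : Y (j + 1)),
        φ (j + 1) y = dX (j + 1) (dX j x' + φ j y') → dY (j + 1) y = 0)
    -- exactness within the cokernel part of the derived sequence
    ∧ (∀ j, j + 2 ≤ i → ∀ x : X (j + 1),
        (∃ y, dX (j + 1) x = φ (j + 1) y) →
        ∃ (x' : X j) (y' : Y j), x = dX j x' + φ j y')
    -- exactness at the junction term coker φ^{i-1}
    ∧ (∀ j, j + 1 = i → ∀ (x : X (j + 1)) (y : Y (j + 1)),
        φ (j + 1) y = dX (j + 1) x → dY (j + 1) y = 0 →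
        ∃ (x' : X j) (y' : Y j), x = dX j x' + φ j y')
    -- exactness at the junction term ker φ^{i+1}
    ∧ (∀ y : Y (i + 1), φ (i + 1) y = 0 → dY (i + 1) y = 0 →
        ∃ (x : X i) (y₀ : Y i), φ i y₀ = dX i x ∧ dY i y₀ = y)
    -- exactness within the kernel part of the derived sequence
    ∧ (∀ j, i + 2 ≤ j + 1 → ∀ y : Y (j + 1),
        φ (j + 1) y = 0 → dY (j + 1) y = 0 →
        ∃ y' : Y j, φ j y' = 0 ∧ dY j y' = y) := by

  have hφ' : ∀ n (y : Y n), φ (n + 1) (dY n y) = dX (n + 1) (φ n y) :=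
    fun n y => LinearMap.congr_fun (hφ n) y
  have hdX' : ∀ n (x : X n), dX (n + 1) (dX n x) = 0 :=
    fun n x => LinearMap.congr_fun (hdX n) x
  have hdY' : ∀ n (y : Y n), dY (n + 1) (dY n y) = 0 :=
    fun n y => LinearMap.congr_fun (hdY n) y
  have hinj2 : ∀ k, k ≤ i → Function.Injective (φ k) := by
    intro k hk
    rcases eq_or_lt_of_le hk with h | h
    · subst h; exact hbij.1
    · exact hinj k h
  have hsurj' : ∀ k, i ≤ k → Function.Surjective (φ k) := by
    intro k hk
    rcases eq_or_lt_of_le hk with h | h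
    · subst h; exact hbij.2
    · exact hsurj k h
  refine ⟨?_, ?_, ?_, ?_, ?_, ?_⟩
  · intro x y h
    rw [hφ', h, hdX']
  · intro j hj x' y' y h
    rw [map_add, hdX', zero_add, ← hφ'] at h
    have : y = dY j y' := by
      have hinj' : Function.Injective (φ (j + 1)) := hj ▸ hbij.1
      exact hinj' h
    rw [this, hdY']
  · rintro j hj x ⟨y, hy⟩
    have hy1 : dY (j + 1) y = 0 := by
      apply hinj2 (j + 2) (by omega)
      rw [hφ', ← hy, hdX', map_zero]
    obtain ⟨y', hy'⟩ := hYexact.2 j y hy1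
    have hx : dX (j + 1) (x - φ j y') = 0 := by
      rw [map_sub, hy, ← hy', hφ', sub_self]
    obtain ⟨x', hx'⟩ := hXexact.2 j _ hx
    exact ⟨x', y', by rw [hx']; abel⟩
  · intro j hj x y h hy
    obtain ⟨y', hy'⟩ := hYexact.2 j y hy
    have hx : dX (j + 1) (x - φ j y') = 0 := by
      rw [map_sub, ← h, ← hy', hφ', sub_self]
    obtain ⟨x', hx'⟩ := hXexact.2 j _ hx
    exact ⟨x', y', by rw [hx']; abel⟩
  · intro y hφy hy
    obtain ⟨y₀, hy₀⟩ := hYexact.2 i y hy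
    have hx : dX (i + 1) (φ i y₀) = 0 := by
      rw [← hφ', hy₀, hφy]
    obtain ⟨x, hx⟩ := hXexact.2 i _ hx
    exact ⟨x, y₀, hx.symm, hy₀⟩
  · intro j hj y hφy hy
    obtain ⟨k, rfl⟩ : ∃ k, j = k + 1 := ⟨j - 1, by omega⟩
    obtain ⟨y₁, hy₁⟩ := hYexact.2 (k + 1) y hy
    have hx : dX (k + 2) (φ (k + 1) y₁) = 0 := by
      rw [← hφ', hy₁, hφy]
    obtain ⟨x, hx⟩ := hXexact.2 (k + 1) _ hx
    obtain ⟨z, hz⟩ := hsurj' k (by omega) x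
    refine ⟨y₁ - dY k z, ?_, ?_⟩
    · rw [map_sub, hφ', hz, hx, sub_self]
    · rw [map_sub, hdY', sub_zero, hy₁]
end

section
/- A piecewise constant function on the Clough–Tocher split of a triangle T (three subtriangles sharing an interior point) is uniquely determined by its integrals against affine functions on T; equivalently, any u ∈ P¹(T) is uniquely determined by its integrals over the three subtriangles of the split, since their barycenters are not collinear. -/
/-!
The integral of an affine function over a triangle is its area times its value at the centroid:
an affine change of variables reduces this to the standard triangle, whose first moments equal a
third of its area because the affine symmetries permuting its vertices preserve it. The subtriangles
of the Clough–Tocher split have positive area, since the interior point `z` has positive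
barycentric coordinates, so both claims reduce to the affine independence of the centroids of
the subtriangles. These centroids are the images of the vertices of `T` under the homothety of
ratio `-1/3` about the centroid of `z, v 0, v 1, v 2`.
-/

open Matrix MeasureTheory Set

section AddHaar

variable {E : Type*} [NormedAddCommGroup E] [NormedSpace ℝ E] [FiniteDimensional ℝ E]
  [MeasurableSpace E] (μ : Measure E) [μ.IsAddHaarMeasure]

theorem AffineIndependent.measureReal_convexHull_pos {ι : Type*} [Fintype ι] {p : ι → E}
    (hp : AffineIndependent ℝ p) (hcard : Fintype.card ι = Module.finrank ℝ E + 1) :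
    0 < μ.real (convexHull ℝ (range p)) := by
  have hspan := hp.affineSpan_eq_top_iff_card_eq_finrank_add_one.2 hcard
  refine ENNReal.toReal_pos (Measure.measure_pos_of_nonempty_interior μ ?_).ne'
    (((finite_range p).isCompact_convexHull ℝ).measure_lt_top).ne
  exact interior_convexHull_nonempty_iff_affineSpan_eq_top.2 hspan

theorem AffineMap.setIntegral_image [BorelSpace E] {F : Type*} [NormedAddCommGroup F]
    [NormedSpace ℝ F] (A : E →ᵃ[ℝ] E) (hA : Function.Injective A) {s : Set E}
    (hs : MeasurableSet s) (f : E → F) :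
    ∫ x in A '' s, f x ∂μ = |LinearMap.det A.linear| • ∫ x in s, f (A x) ∂μ := by
  have hA' (x : E) (_ : x ∈ s) :
      HasFDerivWithinAt A (LinearMap.toContinuousLinearMap A.linear) s x := by
    rw [AffineMap.decomp A]
    exact ((LinearMap.toContinuousLinearMap A.linear).hasFDerivAt.add_const _).hasFDerivWithinAt
  rw [integral_image_eq_integral_abs_det_fderiv_smul μ hs hA' hA.injOn, integral_smul]
  rfl

end AddHaar

theorem AffineMap.apply_eq_add_sum {ι : Type*} [Fintype ι] [DecidableEq ι]
    (ψ : (ι → ℝ) →ᵃ[ℝ] ℝ) (y : ι → ℝ) :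
    ψ y = ψ 0 + ∑ i, y i * (ψ (Pi.single i 1) - ψ 0) := by
  conv_lhs => rw [AffineMap.decomp ψ]
  simp only [Pi.add_apply, LinearMap.pi_apply_eq_sum_univ ψ.linear y, smul_eq_mul,
    add_comm (ψ 0)]
  congr! 3 with i
  have hsingle : (fun j => if i = j then (1 : ℝ) else 0) = Pi.single i (1 : ℝ) -ᵥ (0 : ι → ℝ) := by
    ext j
    simp [Pi.single_apply, eq_comm]
  rw [hsingle, AffineMap.linearMap_vsub, vsub_eq_sub]

def stdTriangle : Set (Fin 2 → ℝ) := convexHull ℝ {0, Pi.single 0 1, Pi.single 1 1}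

theorem isCompact_stdTriangle : IsCompact stdTriangle :=
  (toFinite _).isCompact_convexHull ℝ

theorem affineIndependent_stdTriangle :
    AffineIndependent ℝ (![0, Pi.single 0 1, Pi.single 1 1] : Fin 3 → Fin 2 → ℝ) := by
  rw [affineIndependent_iff_of_fintype]
  intro w hw hcomb
  rw [Finset.weightedVSub_eq_linear_combination _ hw, Fin.sum_univ_three] at hcomb
  have h1 : w 1 = 0 := by simpa using congrFun hcomb 0
  have h2 : w 2 = 0 := by simpa using congrFun hcomb 1
  have h0 : w 0 = 0 := by simpa [Fin.sum_univ_three, h1, h2] using hw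
  intro i
  fin_cases i <;> assumption

theorem setIntegral_stdTriangle_affineMap (ψ : (Fin 2 → ℝ) →ᵃ[ℝ] ℝ) :
    ∫ y in stdTriangle, ψ y = volume.real stdTriangle * ψ 0
      + (ψ (Pi.single 0 1) - ψ 0) * (∫ y in stdTriangle, y 0)
      + (ψ (Pi.single 1 1) - ψ 0) * ∫ y in stdTriangle, y 1 := by
  have hint {f : (Fin 2 → ℝ) → ℝ} (hf : Continuous f) : IntegrableOn f stdTriangle :=
    hf.continuousOn.integrableOn_compact isCompact_stdTriangle
  calc ∫ y in stdTriangle, ψ y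
      = ∫ y in stdTriangle, (ψ 0 + (y 0 * (ψ (Pi.single 0 1) - ψ 0)
          + y 1 * (ψ (Pi.single 1 1) - ψ 0))) := by
        congr 1 with y
        rw [ψ.apply_eq_add_sum, Fin.sum_univ_two]
    _ = _ := by
        rw [integral_add (hint (by fun_prop)) (hint (by fun_prop)),
          integral_add (hint (by fun_prop)) (hint (by fun_prop)), setIntegral_const,
          integral_mul_const, integral_mul_const, smul_eq_mul]
        ring

noncomputable def triangleMap (p q r : Fin 2 → ℝ) : (Fin 2 → ℝ) →ᵃ[ℝ] (Fin 2 → ℝ) :=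
  (Fintype.linearCombination ℝ ![q - p, r - p]).toAffineMap + AffineMap.const ℝ _ p

section TriangleMap

variable {p q r : Fin 2 → ℝ}

theorem triangleMap_apply (y : Fin 2 → ℝ) :
    triangleMap p q r y = y 0 • (q - p) + y 1 • (r - p) + p := by
  simp [triangleMap, Fintype.linearCombination_apply, Fin.sum_univ_two]

@[simp]
theorem triangleMap_zero : triangleMap p q r 0 = p := by
  simp [triangleMap_apply]

@[simp]
theorem triangleMap_single_zero : triangleMap p q r (Pi.single 0 1) = q := by
  simp [triangleMap_apply]

@[simp]
theorem triangleMap_single_one : triangleMap p q r (Pi.single 1 1) = r := by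
  simp [triangleMap_apply]

theorem image_triangleMap_stdTriangle :
    triangleMap p q r '' stdTriangle = convexHull ℝ {p, q, r} := by
  rw [stdTriangle, AffineMap.image_convexHull, image_insert_eq, image_insert_eq, image_singleton,
    triangleMap_zero, triangleMap_single_zero, triangleMap_single_one]

theorem triangleMap_injective (h : AffineIndependent ℝ ![p, q, r]) :
    Function.Injective (triangleMap p q r) := by
  intro y y' hyy'
  rw [triangleMap_apply, triangleMap_apply] at hyy'
  have hw := affineIndependent_iff.1 h Finset.univ
    ![-(y 0 - y' 0) - (y 1 - y' 1), y 0 - y' 0, y 1 - y' 1]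
    (by simp only [Fin.sum_univ_three, cons_val_zero, cons_val_one, cons_val]; ring) (by
      simp only [Fin.sum_univ_three, cons_val_zero, cons_val_one, cons_val]
      linear_combination (norm := module) hyy')
  ext j
  fin_cases j
  · simpa [sub_eq_zero] using hw 1
  · simpa [sub_eq_zero] using hw 2

theorem measureReal_convexHull_triangle_pos (h : AffineIndependent ℝ ![p, q, r]) :
    0 < volume.real (convexHull ℝ {p, q, r}) := by
  have := h.measureReal_convexHull_pos volume (by simp)
  rwa [range_cons, range_cons, range_cons_empty, singleton_union, singleton_union] at this

theorem setIntegral_triangle_affineMap_eq_det_mul (h : AffineIndependent ℝ ![p, q, r])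
    (φ : (Fin 2 → ℝ) →ᵃ[ℝ] ℝ) :
    ∫ x in convexHull ℝ {p, q, r}, φ x = |LinearMap.det (triangleMap p q r).linear| *
      (volume.real stdTriangle * φ p + (φ q - φ p) * (∫ y in stdTriangle, y 0)
        + (φ r - φ p) * ∫ y in stdTriangle, y 1) := by
  rw [← image_triangleMap_stdTriangle, AffineMap.setIntegral_image volume _
    (triangleMap_injective h) isCompact_stdTriangle.measurableSet, smul_eq_mul]
  congr 1
  simpa using setIntegral_stdTriangle_affineMap (φ.comp (triangleMap p q r))

theorem measureReal_triangle (h : AffineIndependent ℝ ![p, q, r]) :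
    volume.real (convexHull ℝ {p, q, r}) =
      |LinearMap.det (triangleMap p q r).linear| * volume.real stdTriangle := by
  simpa using setIntegral_triangle_affineMap_eq_det_mul h (AffineMap.const ℝ _ 1)

theorem setIntegral_stdTriangle_of_convexHull_eq (h : AffineIndependent ℝ ![p, q, r])
    (hS : convexHull ℝ {p, q, r} = stdTriangle) (φ : (Fin 2 → ℝ) →ᵃ[ℝ] ℝ) :
    ∫ y in stdTriangle, φ y = volume.real stdTriangle * φ p
      + (φ q - φ p) * (∫ y in stdTriangle, y 0) + (φ r - φ p) * ∫ y in stdTriangle, y 1 := by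
  have hdet : |LinearMap.det (triangleMap p q r).linear| = 1 := by
    have hvol := measureReal_triangle h
    rw [hS] at hvol
    exact (mul_eq_right₀ (measureReal_convexHull_triangle_pos
      affineIndependent_stdTriangle).ne').1 hvol.symm
  simpa [hS, hdet] using setIntegral_triangle_affineMap_eq_det_mul h φ

end TriangleMap

theorem setIntegral_stdTriangle_apply (j : Fin 2) :
    ∫ y in stdTriangle, y j = volume.real stdTriangle / 3 := by
  have hperm (σ : Equiv.Perm (Fin 3)) :=
    (affineIndependent_equiv σ).2 affineIndependent_stdTriangle
  have hswap := setIntegral_stdTriangle_of_convexHull_eq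
    (p := 0) (q := Pi.single 1 1) (r := Pi.single 0 1)
    (by convert hperm (Equiv.swap 1 2) using 1; ext i : 1; fin_cases i <;> rfl)
    (by rw [stdTriangle, pair_comm]) (LinearMap.proj 0).toAffineMap
  have hrot := setIntegral_stdTriangle_of_convexHull_eq
    (p := Pi.single 0 1) (q := 0) (r := Pi.single 1 1)
    (by convert hperm (Equiv.swap 0 1) using 1; ext i : 1; fin_cases i <;> rfl)
    (by rw [stdTriangle, insert_comm]) (LinearMap.proj 0).toAffineMap
  simp only [LinearMap.coe_toAffineMap, LinearMap.coe_proj, Function.eval, Pi.zero_apply,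
    Pi.single_eq_same, ne_eq, zero_ne_one, not_false_eq_true, Pi.single_eq_of_ne] at hswap hrot
  have h0 : ∫ y in stdTriangle, y 0 = volume.real stdTriangle / 3 := by linarith
  have h1 : ∫ y in stdTriangle, y 1 = volume.real stdTriangle / 3 := by linarith
  fin_cases j
  exacts [h0, h1]

theorem setIntegral_triangle_affineMap {p q r : Fin 2 → ℝ} (h : AffineIndependent ℝ ![p, q, r])
    (φ : (Fin 2 → ℝ) →ᵃ[ℝ] ℝ) :
    ∫ x in convexHull ℝ {p, q, r}, φ x =
      volume.real (convexHull ℝ {p, q, r}) * φ ((3 : ℝ)⁻¹ • (p + q + r)) := by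
  have hφ : φ ((3 : ℝ)⁻¹ • (p + q + r)) = (φ p + φ q + φ r) / 3 := by
    rw [AffineMap.decomp φ]
    simp only [Pi.add_apply, map_smul, map_add, smul_eq_mul]
    ring
  rw [setIntegral_triangle_affineMap_eq_det_mul h, measureReal_triangle h, hφ,
    setIntegral_stdTriangle_apply, setIntegral_stdTriangle_apply]
  ring

theorem AffineBasis.affineIndependent_of_coord_ne_zero {k V P : Type*} [Field k]
    [AddCommGroup V] [Module k V] [AddTorsor V P] (b : AffineBasis (Fin 3) k P) {z : P}
    {i : Fin 3} (hz : b.coord i z ≠ 0) : AffineIndependent k ![z, b (i + 1), b (i + 2)] := by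
  rw [affineIndependent_iff_not_collinear_set]
  intro hcol
  have hne : b (i + 1) ≠ b (i + 2) := b.ind.injective.ne (by fin_cases i <;> decide)
  have hzline : z ∈ line[k, b (i + 1), b (i + 2)] :=
    hcol.mem_affineSpan_of_mem_of_ne (by simp) (by simp) (by simp) hne
  refine hz (AffineMap.eqOn_affineSpan (g := AffineMap.const k P 0) ?_ hzline)
  rintro _ (rfl | rfl) <;> exact b.coord_apply_ne (by fin_cases i <;> decide)

theorem affineIndependent_subtriangle_centroids {E : Type*} [AddCommGroup E] [Module ℝ E]
    {v : Fin 3 → E} (hv : AffineIndependent ℝ v) (z : E) :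
    AffineIndependent ℝ fun i => (3 : ℝ)⁻¹ • (z + v (i + 1) + v (i + 2)) := by
  have hmap : (fun i => (3 : ℝ)⁻¹ • (z + v (i + 1) + v (i + 2))) =
      AffineMap.homothety ((4 : ℝ)⁻¹ • (z + v 0 + v 1 + v 2)) (-(3 : ℝ)⁻¹) ∘ v := by
    ext1 i
    fin_cases i <;>
      simp only [Fin.zero_eta, Fin.mk_one, Fin.reduceFinMk, Fin.reduceAdd, zero_add,
        Function.comp_apply, AffineMap.homothety_apply, vsub_eq_sub, vadd_eq_add] <;>
      module
  rw [hmap]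
  exact hv.map' _ (AffineMap.homothety_injective _ (by norm_num))

section DotProduct

variable {n : Type*} [Fintype n]

noncomputable def affineDotProduct (a : ℝ) (g : n → ℝ) : (n → ℝ) →ᵃ[ℝ] ℝ :=
  AffineMap.const ℝ (n → ℝ) a + (dotProductBilin ℝ ℝ g).toAffineMap

@[simp]
theorem affineDotProduct_apply (a : ℝ) (g x : n → ℝ) :
    affineDotProduct a g x = a + g ⬝ᵥ x := rfl

theorem eq_zero_of_forall_add_dotProduct_eq_zero {ι : Type*} {m : ι → n → ℝ}
    (hm : affineSpan ℝ (range m) = ⊤) {a : ℝ} {g : n → ℝ} (h : ∀ i, a + g ⬝ᵥ m i = 0) :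
    a = 0 ∧ g = 0 := by
  have hφ : affineDotProduct a g = AffineMap.const ℝ _ 0 :=
    AffineMap.ext_on hm (by rintro _ ⟨i, rfl⟩; simpa using h i)
  have ha : a = 0 := by simpa using congr($hφ 0)
  exact ⟨ha, by simpa [ha] using congr($hφ g)⟩

theorem AffineIndependent.eq_zero_of_forall_sum_mul_add_dotProduct_eq_zero {ι : Type*}
    [Fintype ι] {m : ι → n → ℝ} (hm : AffineIndependent ℝ m) {w : ι → ℝ}
    (h : ∀ a g, ∑ i, w i * (a + g ⬝ᵥ m i) = 0) : w = 0 := by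
  have hsum : ∑ i, w i = 0 := by simpa using h 1 0
  set s := ∑ i, w i • m i
  have hcomb : s = 0 := by
    rw [← dotProduct_self_eq_zero]
    simpa [s, dotProduct_sum, dotProduct_smul, mul_comm] using h 0 s
  ext i
  exact hm.eq_zero_of_sum_eq_zero hsum hcomb i (Finset.mem_univ i)

end DotProduct

/-- Let `T` be a nondegenerate triangle with vertices `v` and
`z` an interior point, and let the Clough–Tocher split consist of the three
subtriangles `T_i = conv{z, v_{i+1}, v_{i+2}}`.  An affine function on `T` is
uniquely determined by its integrals over the three subtriangles (the pairing
between `P⁰` of the split and `P¹(T)` is nondegenerate in the first argument),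
and, equivalently, a piecewise constant function on the split is uniquely
determined by its integrals against affine functions on `T`. -/
theorem stmt_19 (v : Fin 3 → (Fin 2 → ℝ)) (hv : AffineIndependent ℝ v)
    (z : Fin 2 → ℝ) (hz : z ∈ interior (convexHull ℝ (Set.range v))) :
    (∀ (a : ℝ) (g : Fin 2 → ℝ),
      (∀ i : Fin 3,
        (∫ x in convexHull ℝ {z, v (i + 1), v (i + 2)}, (a + g ⬝ᵥ x)) = 0) →
      a = 0 ∧ g = 0)
    ∧ ∀ c : Fin 3 → ℝ,
      (∀ (a : ℝ) (g : Fin 2 → ℝ),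
        (∑ i : Fin 3,
          c i * ∫ x in convexHull ℝ {z, v (i + 1), v (i + 2)}, (a + g ⬝ᵥ x)) = 0) →
      c = 0 := by
  let b : AffineBasis (Fin 3) ℝ (Fin 2 → ℝ) :=
    ⟨v, hv, hv.affineSpan_eq_top_iff_card_eq_finrank_add_one.2 (by simp)⟩
  have hsub (i : Fin 3) : AffineIndependent ℝ ![z, v (i + 1), v (i + 2)] := by
    have hcoord : z ∈ interior (convexHull ℝ (range b)) := hz
    rw [b.interior_convexHull] at hcoord
    exact b.affineIndependent_of_coord_ne_zero (hcoord i).ne'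
  set T : Fin 3 → Set (Fin 2 → ℝ) := fun i => convexHull ℝ {z, v (i + 1), v (i + 2)}
  set m : Fin 3 → Fin 2 → ℝ := fun i => (3 : ℝ)⁻¹ • (z + v (i + 1) + v (i + 2))
  have hm : AffineIndependent ℝ m := affineIndependent_subtriangle_centroids hv z
  have hvol (i : Fin 3) : 0 < volume.real (T i) := measureReal_convexHull_triangle_pos (hsub i)
  have hint (i : Fin 3) (a : ℝ) (g : Fin 2 → ℝ) :
      ∫ x in T i, (a + g ⬝ᵥ x) = volume.real (T i) * (a + g ⬝ᵥ m i) :=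
    setIntegral_triangle_affineMap (hsub i) (affineDotProduct a g)
  refine ⟨fun a g h => ?_, fun c hc => ?_⟩
  · refine eq_zero_of_forall_add_dotProduct_eq_zero
      (hm.affineSpan_eq_top_iff_card_eq_finrank_add_one.2 (by simp)) fun i => ?_
    exact (mul_eq_zero.1 ((hint i a g).symm.trans (h i))).resolve_left (hvol i).ne'
  · have hw := hm.eq_zero_of_forall_sum_mul_add_dotProduct_eq_zero
      (w := fun i => c i * volume.real (T i)) fun a g => by
        simp_rw [mul_assoc, ← hint]
        exact hc a g
    ext i
    exact (mul_eq_zero.1 (congrFun hw i)).resolve_right (hvol i).ne'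
end
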